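/- Let B be a Σ-rigid ring with a family Δ = {δ_1,...,δ_n} of σ_i-derivations (δ_i(ab) = σ_i(a)δ_i(b) + δ_i(a)b). If a, b ∈ B satisfy ab = 0, then a·δ_i(b) = 0 and δ_i(a)·b = 0 for every i. -/
import Mathlib


/-- The composition `σ₁^{α₁} ∘ ⋯ ∘ σₙ^{αₙ}` of a family of ring endomorphisms. -/
def sigmaPow {B : Type*} [Ring B] {n : ℕ} (σ : Fin n → B →+* B) (α : Fin n → ℕ) : B → B :=
  fun b => (List.finRange n).foldr (fun i x => (⇑(σ i))^[α i] x) b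

lemma sigmaPow_zero {B : Type*} [Ring B] {n : ℕ} (σ : Fin n → B →+* B) (b : B) :
    sigmaPow σ 0 b = b := by
  simp [sigmaPow]

lemma foldr_single {B : Type*} [Ring B] {n : ℕ} (σ : Fin n → B →+* B) (i : Fin n) (b : B)
    (l : List (Fin n)) :
    l.foldr (fun j x => (⇑(σ j))^[if j = i then 1 else 0] x) b = (⇑(σ i))^[l.count i] b := by
  induction l with
  | nil => simp
  | cons j l ih =>
      by_cases h : j = i <;>
        simp [List.count_cons, h, ih, Function.iterate_succ_apply']

lemma sigmaPow_single {B : Type*} [Ring B] {n : ℕ} (σ : Fin n → B →+* B) (i : Fin n) (b : B) :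
    sigmaPow σ (fun j => if j = i then 1 else 0) b = σ i b := by
  rw [sigmaPow, foldr_single, List.count_eq_one_of_mem (List.nodup_finRange n) (List.mem_finRange i)]
  simp

theorem sigma_rigid_delta_mul_zero (B : Type*) [Ring B] (n : ℕ) (σ : Fin n → B →+* B)
    (δ : Fin n → B → B)
    (hadd : ∀ i (x y : B), δ i (x + y) = δ i x + δ i y)
    (hleib : ∀ i (x y : B), δ i (x * y) = σ i x * δ i y + δ i x * y)
    (hrigid : ∀ (r : B) (α : Fin n → ℕ), r * sigmaPow σ α r = 0 → r = 0)
    (a b : B) (hab : a * b = 0) :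
    ∀ i, a * δ i b = 0 ∧ δ i a * b = 0 := by
  -- reduced
  have hred : ∀ r : B, r * r = 0 → r = 0 := by
    intro r h
    exact hrigid r 0 (by rwa [sigmaPow_zero])
  -- zero-commute
  have hcomm : ∀ x y : B, x * y = 0 → y * x = 0 := by
    intro x y h
    apply hred
    calc y * x * (y * x) = y * (x * y) * x := by noncomm_ring
    _ = 0 := by rw [h]; simp
  -- x*y = 0 → x * σ i y = 0
  have hsig : ∀ (x y : B) (i : Fin n), x * y = 0 → x * σ i y = 0 := by
    intro x y i h
    have hyx := hcomm x y h
    apply hrigid _ (fun j => if j = i then 1 else 0)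
    rw [sigmaPow_single, map_mul]
    calc x * σ i y * (σ i x * σ i (σ i y))
        = x * (σ i y * σ i x) * σ i (σ i y) := by noncomm_ring
      _ = x * σ i (y * x) * σ i (σ i y) := by rw [map_mul]
      _ = 0 := by rw [hyx, map_zero]; simp
  -- σ i x * y = 0 → x * y = 0
  have hsig' : ∀ (x y : B) (i : Fin n), σ i x * y = 0 → x * y = 0 := by
    intro x y i h
    have h' : y * σ i x = 0 := hcomm _ _ h
    apply hrigid _ (fun j => if j = i then 1 else 0)
    rw [sigmaPow_single, map_mul]
    calc x * y * (σ i x * σ i y)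
        = x * (y * σ i x) * σ i y := by noncomm_ring
      _ = 0 := by rw [h']; simp
  intro i
  have hd0 : δ i (0 : B) = 0 := by
    have h := hadd i 0 0
    rw [add_zero] at h
    exact add_eq_left.mp h.symm
  have hleib0 : σ i a * δ i b + δ i a * b = 0 := by
    have h := hleib i a b
    rw [hab] at h
    exact h.symm.trans hd0
  have hbsa : b * σ i a = 0 := hsig b a i (hcomm a b hab)
  have h1 : σ i a * δ i b * σ i a = 0 := by
    have h2 : (σ i a * δ i b + δ i a * b) * σ i a = 0 := by rw [hleib0]; simp
    calc σ i a * δ i b * σ i a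
        = (σ i a * δ i b + δ i a * b) * σ i a - δ i a * (b * σ i a) := by noncomm_ring
      _ = 0 := by rw [h2, hbsa]; simp
  have h3 : δ i b * σ i a = 0 := by
    apply hred
    calc δ i b * σ i a * (δ i b * σ i a) = δ i b * (σ i a * δ i b * σ i a) := by noncomm_ring
      _ = 0 := by rw [h1]; simp
  have h4 : σ i a * δ i b = 0 := hcomm _ _ h3
  have ha : a * δ i b = 0 := hsig' a (δ i b) i h4
  have hb : δ i a * b = 0 := by
    have h := hleib0
    rw [h4, zero_add] at h
    exact h
  exact ⟨ha, hb⟩
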